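/- arXiv:2007.13288 — 3 statements merged into one kernel-verified Lean document; each statement's English description precedes it below -/
import Mathlib

section
/- Let A be an invertible real n×n matrix with rows a_1,...,a_n, let x be the solution of Ax = b, and let x_k be the current iterate. If the randomized Kaczmarz/SGD update x_{k+1} = x_k + ((b_i - ⟨a_i, x_k⟩)/‖a_i‖²) a_i is applied with index i chosen with probability ‖a_i‖²/‖A‖_F², then with α = max_{1≤i≤n} ‖A a_i‖²/‖a_i‖², the expected value of ‖A x_{k+1} - b‖² satisfies E‖A x_{k+1} - b‖² ≤ (1 + α/‖A‖_F²)‖A x_k - b‖² − (2/‖A‖_F²)‖Aᵀ(A x_k − b)‖². -/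
open RealInnerProductSpace Finset Matrix
noncomputable section

def toE {n : ℕ} (v : Fin n → ℝ) : EuclideanSpace ℝ (Fin n) := WithLp.toLp 2 v

/-!
Write `r = A x_k - b`. The step along row `i` changes the residual to
`r - (r_i / ‖a_i‖²) A a_i`. Expanding the square and averaging with the weights
`‖a_i‖² / ‖A‖_F²`, the weights cancel the denominators of the step: the constant terms average to
`‖r‖²`, the cross terms add up to `(2 / ‖A‖_F²) ∑ r_i ⟨r, A a_i⟩ = (2 / ‖A‖_F²) ‖Aᵀ r‖²` because
`∑ r_i a_i = Aᵀ r`, and the quadratic terms to `(1 / ‖A‖_F²) ∑ r_i² ‖A a_i‖² / ‖a_i‖²`, which is at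
most `(α / ‖A‖_F²) ‖r‖²`.
-/

namespace Matrix

variable {ι : Type*} [Fintype ι]

theorem sum_mul_dotProduct_mulVec_row {R : Type*} [CommSemiring R] (A : Matrix ι ι R)
    (r : ι → R) : ∑ i, r i * (r ⬝ᵥ A *ᵥ A i) = Aᵀ *ᵥ r ⬝ᵥ Aᵀ *ᵥ r := calc
  _ = r ⬝ᵥ A *ᵥ ∑ i, r i • A i := by
    simp only [mulVec_sum, mulVec_smul, dotProduct_sum, dotProduct_smul, smul_eq_mul]
  _ = Aᵀ *ᵥ r ⬝ᵥ Aᵀ *ᵥ r := by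
    rw [← vecMul_eq_sum, ← mulVec_transpose, dotProduct_mulVec, ← mulVec_transpose]

theorem sub_smul_dotProduct_sub_smul {R : Type*} [CommRing R] (r w : ι → R) (c : R) :
    (r - c • w) ⬝ᵥ (r - c • w) = r ⬝ᵥ r - 2 * c * (r ⬝ᵥ w) + c ^ 2 * (w ⬝ᵥ w) := by
  simp only [sub_dotProduct, dotProduct_sub, smul_dotProduct, dotProduct_smul, smul_eq_mul,
    dotProduct_comm w r]
  ring

variable {K : Type*} [Field K]

def kaczmarzStep {m : Type*} (A : Matrix m ι K) (b : m → K) (x : ι → K) (i : m) : ι → K :=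
  x + ((b i - A i ⬝ᵥ x) / (A i ⬝ᵥ A i)) • A i

theorem mulVec_kaczmarzStep_sub (A : Matrix ι ι K) (b x : ι → K) (i : ι) :
    A *ᵥ kaczmarzStep A b x i - b
      = (A *ᵥ x - b) - ((A *ᵥ x - b) i / (A i ⬝ᵥ A i)) • A *ᵥ A i := by
  have hres : b i - A i ⬝ᵥ x = -(A *ᵥ x - b) i := (neg_sub _ _).symm
  rw [kaczmarzStep, mulVec_add, mulVec_smul, hres, neg_div, neg_smul]
  abel

variable [LinearOrder K] [IsStrictOrderedRing K]

theorem dotProduct_self_nonneg (v : ι → K) : 0 ≤ v ⬝ᵥ v :=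
  sum_nonneg fun i _ => mul_self_nonneg (v i)

theorem sum_mul_sq_residual_kaczmarzStep (A : Matrix ι ι K) (hrows : ∀ i, A i ≠ 0)
    [Nonempty ι] (b x : ι → K) :
    ∑ i, (A i ⬝ᵥ A i / ∑ j, A j ⬝ᵥ A j) *
        ((A *ᵥ kaczmarzStep A b x i - b) ⬝ᵥ (A *ᵥ kaczmarzStep A b x i - b))
      = (A *ᵥ x - b) ⬝ᵥ (A *ᵥ x - b)
        - 2 / (∑ j, A j ⬝ᵥ A j) * (Aᵀ *ᵥ (A *ᵥ x - b) ⬝ᵥ Aᵀ *ᵥ (A *ᵥ x - b))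
        + 1 / (∑ j, A j ⬝ᵥ A j) *
          ∑ i, (A *ᵥ x - b) i ^ 2 * (A *ᵥ A i ⬝ᵥ A *ᵥ A i / (A i ⬝ᵥ A i)) := by
  set r := A *ᵥ x - b
  set F := ∑ j, A j ⬝ᵥ A j
  have hrow_pos (i : ι) : 0 < A i ⬝ᵥ A i :=
    (dotProduct_self_nonneg _).lt_of_ne' (dotProduct_self_eq_zero.not.mpr (hrows i))
  have hF : F ≠ 0 := (sum_pos (fun j _ => hrow_pos j) univ_nonempty).ne'
  have hterm (i : ι) : (A i ⬝ᵥ A i / F) *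
        ((r - (r i / (A i ⬝ᵥ A i)) • A *ᵥ A i) ⬝ᵥ (r - (r i / (A i ⬝ᵥ A i)) • A *ᵥ A i))
      = A i ⬝ᵥ A i / F * (r ⬝ᵥ r) - 2 / F * (r i * (r ⬝ᵥ A *ᵥ A i))
        + 1 / F * (r i ^ 2 * (A *ᵥ A i ⬝ᵥ A *ᵥ A i / (A i ⬝ᵥ A i))) := by
    rw [sub_smul_dotProduct_sub_smul]
    field_simp [(hrow_pos i).ne']
  simp only [mulVec_kaczmarzStep_sub]
  rw [sum_congr rfl fun i _ => hterm i, sum_add_distrib, sum_sub_distrib, ← sum_mul, ← sum_div,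
    ← mul_sum, ← mul_sum, sum_mul_dotProduct_mulVec_row, div_self hF, one_mul]

theorem sum_mul_sq_residual_kaczmarzStep_le (A : Matrix ι ι K) (hrows : ∀ i, A i ≠ 0)
    [Nonempty ι] {α : K} (hα : ∀ i, A *ᵥ A i ⬝ᵥ A *ᵥ A i / (A i ⬝ᵥ A i) ≤ α) (b x : ι → K) :
    ∑ i, (A i ⬝ᵥ A i / ∑ j, A j ⬝ᵥ A j) *
        ((A *ᵥ kaczmarzStep A b x i - b) ⬝ᵥ (A *ᵥ kaczmarzStep A b x i - b))
      ≤ (1 + α / ∑ j, A j ⬝ᵥ A j) * ((A *ᵥ x - b) ⬝ᵥ (A *ᵥ x - b))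
        - 2 / (∑ j, A j ⬝ᵥ A j) * (Aᵀ *ᵥ (A *ᵥ x - b) ⬝ᵥ Aᵀ *ᵥ (A *ᵥ x - b)) := by
  set r := A *ᵥ x - b
  set F := ∑ j, A j ⬝ᵥ A j
  have hsum : ∑ i, r i ^ 2 * (A *ᵥ A i ⬝ᵥ A *ᵥ A i / (A i ⬝ᵥ A i)) ≤ α * (r ⬝ᵥ r) := by
    rw [dotProduct, mul_sum]
    refine sum_le_sum fun i _ => ?_
    rw [← sq, mul_comm α]
    exact mul_le_mul_of_nonneg_left (hα i) (sq_nonneg _)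
  have hF : 0 ≤ 1 / F := one_div_nonneg.mpr (sum_nonneg fun j _ => dotProduct_self_nonneg _)
  calc _ = r ⬝ᵥ r - 2 / F * (Aᵀ *ᵥ r ⬝ᵥ Aᵀ *ᵥ r)
          + 1 / F * ∑ i, r i ^ 2 * (A *ᵥ A i ⬝ᵥ A *ᵥ A i / (A i ⬝ᵥ A i)) :=
        sum_mul_sq_residual_kaczmarzStep A hrows b x
    _ ≤ r ⬝ᵥ r - 2 / F * (Aᵀ *ᵥ r ⬝ᵥ Aᵀ *ᵥ r) + 1 / F * (α * (r ⬝ᵥ r)) := by gcongr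
    _ = _ := by ring

end Matrix

theorem norm_toE_sq {n : ℕ} (v : Fin n → ℝ) : ‖toE v‖ ^ 2 = v ⬝ᵥ v := by
  rw [← real_inner_self_eq_norm_sq, toE, EuclideanSpace.inner_toLp_toLp, star_trivial]

theorem inner_toE {n : ℕ} (u v : Fin n → ℝ) : ⟪toE u, toE v⟫ = u ⬝ᵥ v := by
  rw [toE, toE, EuclideanSpace.inner_toLp_toLp, star_trivial, dotProduct_comm]

theorem sgd_least_squares_one_step_general {n : ℕ} (A : Matrix (Fin n) (Fin n) ℝ)
    (hrows : ∀ i, A i ≠ 0)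
    (b xk : Fin n → ℝ)
    (α : ℝ) (hα : IsGreatest (Set.range fun i => ‖toE (A.mulVec (A i))‖ ^ 2 / ‖toE (A i)‖ ^ 2) α) :
    ∑ i, (‖toE (A i)‖ ^ 2 / (∑ j, ‖toE (A j)‖ ^ 2)) *
        ‖toE (A.mulVec (xk + ((b i - ⟪toE (A i), toE xk⟫) / ‖toE (A i)‖ ^ 2) • A i) - b)‖ ^ 2
      ≤ (1 + α / (∑ j, ‖toE (A j)‖ ^ 2)) * ‖toE (A.mulVec xk - b)‖ ^ 2
        - (2 / (∑ j, ‖toE (A j)‖ ^ 2)) * ‖toE (Aᵀ.mulVec (A.mulVec xk - b))‖ ^ 2 := by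
  obtain ⟨⟨i₀, -⟩, hα_max⟩ := hα
  have : Nonempty (Fin n) := ⟨i₀⟩
  simp only [norm_toE_sq, inner_toE] at hα_max ⊢
  exact sum_mul_sq_residual_kaczmarzStep_le A hrows (fun i => hα_max ⟨i, rfl⟩) b xk

/-- Theorem 1: one-step expected decay of `‖A x_{k+1} - b‖²` under randomized
Kaczmarz / SGD with rows chosen with probability `‖a_i‖²/‖A‖_F²`. -/
theorem sgd_least_squares_one_step {n : ℕ} (A : Matrix (Fin n) (Fin n) ℝ)
    (hA : IsUnit A.det) (hrows : ∀ i, A i ≠ 0)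
    (b x xk : Fin n → ℝ) (hx : A.mulVec x = b)
    (α : ℝ) (hα : IsGreatest (Set.range fun i => ‖toE (A.mulVec (A i))‖ ^ 2 / ‖toE (A i)‖ ^ 2) α) :
    ∑ i, (‖toE (A i)‖ ^ 2 / (∑ j, ‖toE (A j)‖ ^ 2)) *
        ‖toE (A.mulVec (xk + ((b i - ⟪toE (A i), toE xk⟫) / ‖toE (A i)‖ ^ 2) • A i) - b)‖ ^ 2
      ≤ (1 + α / (∑ j, ‖toE (A j)‖ ^ 2)) * ‖toE (A.mulVec xk - b)‖ ^ 2
        - (2 / (∑ j, ‖toE (A j)‖ ^ 2)) * ‖toE (Aᵀ.mulVec (A.mulVec xk - b))‖ ^ 2 :=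
  sgd_least_squares_one_step_general A hrows b xk α hα
end
end

section
/- Let A ∈ ℝ^{n×n} be invertible with singular values σ_1 ≥ ... ≥ σ_n > 0, right singular vector v_ℓ associated to σ_ℓ, and x the solution of Ax = b. Under the randomized Kaczmarz update with row i chosen with probability ‖a_i‖²/‖A‖_F², the expectation satisfies E⟨x_k − x, v_ℓ⟩ = (1 − σ_ℓ²/‖A‖_F²)^k ⟨x_0 − x, v_ℓ⟩. -/
open RealInnerProductSpace Finset Matrix
noncomputable section

/-- The Markov transition operator of randomized Kaczmarz: `(kacT A b f) y` is the
expectation of `f` at the next iterate started from `y`, the row `i` being chosen with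
probability `‖a_i‖²/‖A‖_F²`. Its `k`-th iterate applied at `x₀` gives `E f(x_k)`. -/
def kacT {n : ℕ} (A : Matrix (Fin n) (Fin n) ℝ) (b : Fin n → ℝ)
    (f : (Fin n → ℝ) → ℝ) : (Fin n → ℝ) → ℝ := fun y =>
  ∑ i, (‖toE (A i)‖ ^ 2 / (∑ j, ‖toE (A j)‖ ^ 2)) *
    f (y + ((b i - ⟪toE (A i), toE y⟫) / ‖toE (A i)‖ ^ 2) • A i)

/-!
The expected Kaczmarz step `kacT A b` is linear in the observable, and on the functional
`y ↦ ⟨y - x, w⟩` it acts as `w ↦ (I - AᵀA/‖A‖_F²) w`: since `b_i - ⟨a_i, y⟩ = ⟨a_i, x - y⟩`,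
the selection probability `‖a_i‖²/‖A‖_F²` cancels the step length `1/‖a_i‖²`, and summing
`a_i a_iᵀ` over the rows gives `AᵀA`. A right singular vector `v` is an eigenvector of
`AᵀA` with eigenvalue `σ²`, so `y ↦ ⟨y - x, v⟩` is an eigenfunction of `kacT A b` with
eigenvalue `1 - σ²/‖A‖_F²`, and iterating gives the `k`-th power.
-/

lemma toE_inner_toE {n : ℕ} (u w : Fin n → ℝ) : ⟪toE u, toE w⟫ = u ⬝ᵥ w := by
  rw [toE, toE, EuclideanSpace.inner_toLp_toLp, star_trivial, dotProduct_comm]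

section Kaczmarz

variable {n : ℕ} (A : Matrix (Fin n) (Fin n) ℝ) (b : Fin n → ℝ)

lemma kacT_const_mul (r : ℝ) (f : (Fin n → ℝ) → ℝ) :
    kacT A b (fun y => r * f y) = fun y => r * kacT A b f y := by
  funext y
  simp only [kacT, mul_sum]
  exact sum_congr rfl fun i _ => by ring

lemma kacT_iterate_of_eq_const_mul {f : (Fin n → ℝ) → ℝ} {c : ℝ}
    (hf : kacT A b f = fun y => c * f y) (k : ℕ) :
    (kacT A b)^[k] f = fun y => c ^ k * f y := by
  induction k with
  | zero => simp
  | succ k ih =>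
    rw [Function.iterate_succ_apply', ih, kacT_const_mul, hf]
    funext y
    ring

lemma kacT_sub_dotProduct (hrows : ∀ i, A i ≠ 0) {x : Fin n → ℝ} (hx : A *ᵥ x = b)
    (w y : Fin n → ℝ) :
    kacT A b (fun z => (z - x) ⬝ᵥ w) y
      = (y - x) ⬝ᵥ w - (A *ᵥ (y - x)) ⬝ᵥ (A *ᵥ w) / ∑ j, ‖toE (A j)‖ ^ 2 := by
  rcases n.eq_zero_or_pos with rfl | hn
  · simp [kacT]
  have hrow_pos (i : Fin n) : 0 < ‖toE (A i)‖ ^ 2 := by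
    have : toE (A i) ≠ 0 := fun h => hrows i (by simpa [toE] using h)
    positivity
  simp only [kacT]
  set F := ∑ j, ‖toE (A j)‖ ^ 2
  have hF : 0 < F := sum_pos (fun i _ => hrow_pos i) ⟨⟨0, hn⟩, mem_univ _⟩
  have hterm (i : Fin n) :
      ‖toE (A i)‖ ^ 2 / F *
          ((y + ((b i - ⟪toE (A i), toE y⟫) / ‖toE (A i)‖ ^ 2) • A i - x) ⬝ᵥ w)
        = ‖toE (A i)‖ ^ 2 / F * ((y - x) ⬝ᵥ w)
          - (A *ᵥ (y - x)) i * (A *ᵥ w) i / F := by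
    have hb : b i = A i ⬝ᵥ x := by rw [← hx]; rfl
    simp only [toE_inner_toE, mulVec, dotProduct_sub, add_sub_right_comm, add_dotProduct,
      smul_dotProduct, smul_eq_mul, hb]
    have : ‖toE (A i)‖ ≠ 0 := by simpa using (hrow_pos i).ne'
    field_simp
    ring
  have hweights : ∑ i, ‖toE (A i)‖ ^ 2 / F = 1 := by
    rw [← sum_div, div_self hF.ne']
  simp only [hterm, sum_sub_distrib, ← sum_mul, ← sum_div, hweights, one_mul]
  rfl

lemma kacT_sub_dotProduct_of_singular (hrows : ∀ i, A i ≠ 0) {x : Fin n → ℝ}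
    (hx : A *ᵥ x = b) {σ : ℝ} {v : Fin n → ℝ} (hsing : (Aᵀ * A) *ᵥ v = σ ^ 2 • v) :
    kacT A b (fun z => (z - x) ⬝ᵥ v)
      = fun y => (1 - σ ^ 2 / ∑ j, ‖toE (A j)‖ ^ 2) * ((y - x) ⬝ᵥ v) := by
  funext y
  have hgram : (A *ᵥ (y - x)) ⬝ᵥ (A *ᵥ v) = σ ^ 2 * ((y - x) ⬝ᵥ v) := by
    rw [dotProduct_comm, ← dotProduct_transpose_mulVec, mulVec_mulVec, hsing, dotProduct_smul,
      smul_eq_mul]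
  rw [kacT_sub_dotProduct A b hrows hx, hgram]
  ring

end Kaczmarz

theorem kaczmarz_singular_vector_decay_general {n : ℕ} (A : Matrix (Fin n) (Fin n) ℝ)
    (hrows : ∀ i, A i ≠ 0)
    (σℓ : ℝ) (v : Fin n → ℝ)
    (hsing : (Aᵀ * A).mulVec v = (σℓ ^ 2) • v)
    (b x x0 : Fin n → ℝ) (hx : A.mulVec x = b) (k : ℕ) :
    (kacT A b)^[k] (fun y => ⟪toE (y - x), toE v⟫) x0
      = (1 - σℓ ^ 2 / (∑ j, ‖toE (A j)‖ ^ 2)) ^ k * ⟪toE (x0 - x), toE v⟫ := by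
  simp only [toE_inner_toE]
  rw [kacT_iterate_of_eq_const_mul A b (kacT_sub_dotProduct_of_singular A b hrows hx hsing)]

/-- `E ⟨x_k - x, v_ℓ⟩ = (1 - σ_ℓ²/‖A‖_F²)^k ⟨x_0 - x, v_ℓ⟩` for a right singular
vector `v_ℓ` of `A` with singular value `σ_ℓ`. -/
theorem kaczmarz_singular_vector_decay {n : ℕ} (A : Matrix (Fin n) (Fin n) ℝ)
    (hA : IsUnit A.det) (hrows : ∀ i, A i ≠ 0)
    (σℓ : ℝ) (hσ : 0 < σℓ) (v : Fin n → ℝ) (hv : v ≠ 0)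
    (hsing : (Aᵀ * A).mulVec v = (σℓ ^ 2) • v)
    (b x x0 : Fin n → ℝ) (hx : A.mulVec x = b) (k : ℕ) :
    (kacT A b)^[k] (fun y => ⟪toE (y - x), toE v⟫) x0
      = (1 - σℓ ^ 2 / (∑ j, ‖toE (A j)‖ ^ 2)) ^ k * ⟪toE (x0 - x), toE v⟫ :=
  kaczmarz_singular_vector_decay_general A hrows σℓ v hsing b x x0 hx k
end
end

section
/- Strohmer–Vershynin bound: for A ∈ ℝ^{n×n} invertible, x = A⁻¹b, and the randomized Kaczmarz iteration with row i chosen with probability ‖a_i‖²/‖A‖_F², one has E‖x_k − x‖² ≤ (1 − 1/(‖A⁻¹‖_{op}² ‖A‖_F²))^k ‖x_0 − x‖². -/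
open RealInnerProductSpace Finset Matrix
noncomputable section

/-! A Kaczmarz step replaces the error `e = y - x` by its orthogonal projection onto the
hyperplane `a_iᗮ`, so `‖e'‖² = ‖e‖² - ⟪a_i, e⟫² / ‖a_i‖²`. Averaging with the weights
`‖a_i‖² / ‖A‖_F²` gives `E ‖e'‖² = ‖e‖² - ‖A e‖² / ‖A‖_F²`, and `‖e‖ ≤ ‖A⁻¹‖ ‖A e‖` bounds
this by `(1 - 1 / (‖A⁻¹‖² ‖A‖_F²)) ‖e‖²`. The transition operator is monotone and linear,
so this one-step contraction iterates. -/

theorem iterate_le_pow_smul_of_le_smul {X : Type*} {T : (X → ℝ) → X → ℝ} (hmono : Monotone T)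
    (hsmul : ∀ (c : ℝ) f, T (c • f) = c • T f) {c : ℝ} (hc : 0 ≤ c) {g : X → ℝ}
    (hg : T g ≤ c • g) (k : ℕ) : T^[k] g ≤ c ^ k • g := by
  induction k with
  | zero => simp
  | succ k ih =>
    rw [Function.iterate_succ_apply', pow_succ, mul_smul]
    calc T (T^[k] g) ≤ T (c ^ k • g) := hmono ih
      _ = c ^ k • T g := hsmul _ _
      _ ≤ c ^ k • c • g := smul_le_smul_of_nonneg_left hg (pow_nonneg hc k)

theorem norm_sq_sub_orthogonal_proj {F : Type*} [NormedAddCommGroup F] [InnerProductSpace ℝ F]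
    {a : F} (ha : a ≠ 0) (e : F) :
    ‖e - (⟪a, e⟫ / ‖a‖ ^ 2) • a‖ ^ 2 = ‖e‖ ^ 2 - ⟪a, e⟫ ^ 2 / ‖a‖ ^ 2 := by
  have : ‖a‖ ≠ 0 := norm_ne_zero_iff.mpr ha
  rw [norm_sub_sq_real, real_inner_smul_right, norm_smul, Real.norm_eq_abs, mul_pow, sq_abs,
    real_inner_comm]
  field_simp
  ring

section Kaczmarz

variable {n : ℕ}

lemma toE_ne_zero {v : Fin n → ℝ} (hv : v ≠ 0) : toE v ≠ 0 :=
  fun h => hv ((WithLp.toLp_eq_zero 2).mp h)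

lemma mulVec_apply_eq_inner (A : Matrix (Fin n) (Fin n) ℝ) (v : Fin n → ℝ) (i : Fin n) :
    (A *ᵥ v) i = ⟪toE (A i), toE v⟫ := by
  simp [toE, PiLp.inner_apply, mulVec, dotProduct, mul_comm]

lemma norm_toE_mulVec_sq (A : Matrix (Fin n) (Fin n) ℝ) (v : Fin n → ℝ) :
    ‖toE (A *ᵥ v)‖ ^ 2 = ∑ i, ⟪toE (A i), toE v⟫ ^ 2 := by
  simp [EuclideanSpace.norm_sq_eq, toE, mulVec_apply_eq_inner]

lemma norm_toE_mulVec_sq_le (A : Matrix (Fin n) (Fin n) ℝ) (v : Fin n → ℝ) :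
    ‖toE (A *ᵥ v)‖ ^ 2 ≤ (∑ i, ‖toE (A i)‖ ^ 2) * ‖toE v‖ ^ 2 := by
  rw [norm_toE_mulVec_sq, Finset.sum_mul]
  gcongr with i
  rw [← mul_pow, ← sq_abs]
  gcongr
  exact abs_real_inner_le_norm _ _

lemma norm_toE_sq_le_opNorm_inv_sq_mul {A : Matrix (Fin n) (Fin n) ℝ} (hA : IsUnit A.det)
    (v : Fin n → ℝ) :
    ‖toE v‖ ^ 2 ≤ ‖Matrix.toEuclideanCLM (𝕜 := ℝ) A⁻¹‖ ^ 2 * ‖toE (A *ᵥ v)‖ ^ 2 := by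
  have hv : Matrix.toEuclideanCLM (𝕜 := ℝ) A⁻¹ (toE (A *ᵥ v)) = toE v := by
    rw [toE, Matrix.toEuclideanCLM_toLp, mulVec_mulVec, nonsing_inv_mul A hA, one_mulVec, toE]
  rw [← mul_pow, ← hv]
  gcongr
  exact ContinuousLinearMap.le_opNorm _ _

/-- The square of Strohmer–Vershynin's scaled condition number `κ(A) = ‖A⁻¹‖ ‖A‖_F`. -/
def scaledCondSq (A : Matrix (Fin n) (Fin n) ℝ) : ℝ :=
  ‖Matrix.toEuclideanCLM (𝕜 := ℝ) A⁻¹‖ ^ 2 * ∑ j, ‖toE (A j)‖ ^ 2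

lemma one_le_scaledCondSq [Nonempty (Fin n)] {A : Matrix (Fin n) (Fin n) ℝ}
    (hA : IsUnit A.det) : 1 ≤ scaledCondSq A := by
  obtain ⟨v, hv0⟩ := exists_ne (0 : Fin n → ℝ)
  have hv : 0 < ‖toE v‖ ^ 2 := by have := toE_ne_zero hv0; positivity
  refine le_of_mul_le_mul_left ?_ hv
  calc ‖toE v‖ ^ 2 * 1 ≤ ‖Matrix.toEuclideanCLM (𝕜 := ℝ) A⁻¹‖ ^ 2 * ‖toE (A *ᵥ v)‖ ^ 2 := by
        rw [mul_one]; exact norm_toE_sq_le_opNorm_inv_sq_mul hA v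
    _ ≤ ‖Matrix.toEuclideanCLM (𝕜 := ℝ) A⁻¹‖ ^ 2 * ((∑ j, ‖toE (A j)‖ ^ 2) * ‖toE v‖ ^ 2) := by
        gcongr; exact norm_toE_mulVec_sq_le A v
    _ = ‖toE v‖ ^ 2 * scaledCondSq A := by rw [scaledCondSq]; ring

lemma one_sub_inv_scaledCondSq_nonneg {A : Matrix (Fin n) (Fin n) ℝ} (hA : IsUnit A.det) :
    0 ≤ 1 - 1 / scaledCondSq A := by
  rcases isEmpty_or_nonempty (Fin n) with hn | hn
  · simp [scaledCondSq]
  · have h := one_le_scaledCondSq hA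
    rw [sub_nonneg]
    exact div_le_one_of_le₀ h (zero_le_one.trans h)

lemma toE_kaczmarz_step_sub (A : Matrix (Fin n) (Fin n) ℝ) (x y : Fin n → ℝ) (i : Fin n) :
    toE (y + (((A *ᵥ x) i - ⟪toE (A i), toE y⟫) / ‖toE (A i)‖ ^ 2) • A i - x) =
      toE (y - x) - (⟪toE (A i), toE (y - x)⟫ / ‖toE (A i)‖ ^ 2) • toE (A i) := by
  have hinner : ⟪toE (A i), toE (y - x)⟫ = -((A *ᵥ x) i - ⟪toE (A i), toE y⟫) := by
    rw [mulVec_apply_eq_inner, neg_sub, ← inner_sub_right]; rfl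
  rw [hinner, neg_div, neg_smul, sub_neg_eq_add]
  simp only [toE, WithLp.toLp_sub, WithLp.toLp_add, WithLp.toLp_smul]
  abel

lemma kacT_mono (A : Matrix (Fin n) (Fin n) ℝ) (b : Fin n → ℝ) : Monotone (kacT A b) :=
  fun _ _ hfg _ => Finset.sum_le_sum fun _ _ => by gcongr; exact hfg _

lemma kacT_smul (A : Matrix (Fin n) (Fin n) ℝ) (b : Fin n → ℝ) (c : ℝ)
    (f : (Fin n → ℝ) → ℝ) : kacT A b (c • f) = c • kacT A b f := by
  ext y
  simp only [kacT, Pi.smul_apply, smul_eq_mul, Finset.mul_sum, mul_left_comm]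

lemma kacT_norm_sq_sub {A : Matrix (Fin n) (Fin n) ℝ} (hrows : ∀ i, A i ≠ 0)
    (hF : ∑ j, ‖toE (A j)‖ ^ 2 ≠ 0) (x y : Fin n → ℝ) :
    kacT A (A *ᵥ x) (fun z => ‖toE (z - x)‖ ^ 2) y =
      ‖toE (y - x)‖ ^ 2 - ‖toE (A *ᵥ (y - x))‖ ^ 2 / ∑ j, ‖toE (A j)‖ ^ 2 := by
  set F := ∑ j, ‖toE (A j)‖ ^ 2
  calc kacT A (A *ᵥ x) (fun z => ‖toE (z - x)‖ ^ 2) y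
      = ∑ i, ‖toE (A i)‖ ^ 2 / F *
          (‖toE (y - x)‖ ^ 2 - ⟪toE (A i), toE (y - x)⟫ ^ 2 / ‖toE (A i)‖ ^ 2) := by
        simp only [kacT, toE_kaczmarz_step_sub,
          norm_sq_sub_orthogonal_proj (toE_ne_zero (hrows _))]
        rfl
    _ = ∑ i, (‖toE (A i)‖ ^ 2 / F * ‖toE (y - x)‖ ^ 2 - ⟪toE (A i), toE (y - x)⟫ ^ 2 / F) := by
        refine Finset.sum_congr rfl fun i _ => ?_
        have : ‖toE (A i)‖ ≠ 0 := norm_ne_zero_iff.mpr (toE_ne_zero (hrows i))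
        field_simp
    _ = ‖toE (y - x)‖ ^ 2 - ‖toE (A *ᵥ (y - x))‖ ^ 2 / F := by
        rw [Finset.sum_sub_distrib, ← Finset.sum_mul, ← Finset.sum_div, div_self hF, one_mul,
          norm_toE_mulVec_sq, Finset.sum_div]

lemma kacT_norm_sq_sub_le {A : Matrix (Fin n) (Fin n) ℝ} (hA : IsUnit A.det)
    (hrows : ∀ i, A i ≠ 0) (x y : Fin n → ℝ) :
    kacT A (A *ᵥ x) (fun z => ‖toE (z - x)‖ ^ 2) y ≤
      (1 - 1 / scaledCondSq A) * ‖toE (y - x)‖ ^ 2 := by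
  rcases isEmpty_or_nonempty (Fin n) with hn | hn
  · simp only [kacT, Finset.univ_eq_empty, Finset.sum_empty]
    exact mul_nonneg (one_sub_inv_scaledCondSq_nonneg hA) (sq_nonneg _)
  have hF : 0 < ∑ j, ‖toE (A j)‖ ^ 2 := Finset.sum_pos
    (fun i _ => by have := toE_ne_zero (hrows i); positivity) Finset.univ_nonempty
  have hκ : 0 < scaledCondSq A := zero_lt_one.trans_le (one_le_scaledCondSq hA)
  have hinv := norm_toE_sq_le_opNorm_inv_sq_mul hA (y - x)
  rw [kacT_norm_sq_sub hrows hF.ne' x y, one_sub_mul, one_div_mul_eq_div]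
  gcongr ‖toE (y - x)‖ ^ 2 - ?_
  rw [div_le_div_iff₀ hκ hF, scaledCondSq]
  linarith [mul_le_mul_of_nonneg_right hinv hF.le]

end Kaczmarz

/-- Strohmer–Vershynin: `E ‖x_k - x‖² ≤ (1 - 1/(‖A⁻¹‖_op² ‖A‖_F²))^k ‖x_0 - x‖²`. -/
theorem strohmer_vershynin {n : ℕ} (A : Matrix (Fin n) (Fin n) ℝ)
    (hA : IsUnit A.det) (hrows : ∀ i, A i ≠ 0)
    (b x x0 : Fin n → ℝ) (hx : A.mulVec x = b) (k : ℕ) :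
    (kacT A b)^[k] (fun y => ‖toE (y - x)‖ ^ 2) x0
      ≤ (1 - 1 / (‖Matrix.toEuclideanCLM (𝕜 := ℝ) A⁻¹‖ ^ 2 * (∑ j, ‖toE (A j)‖ ^ 2))) ^ k *
          ‖toE (x0 - x)‖ ^ 2 := by
  subst hx
  exact iterate_le_pow_smul_of_le_smul (kacT_mono A _) (kacT_smul A _)
    (one_sub_inv_scaledCondSq_nonneg hA) (kacT_norm_sq_sub_le hA hrows x) k x0
end
end
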